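/- In the graph G_{q,k} (q ≥ 1, k ≥ 1), each edge {p_i, s} (1 ≤ i ≤ q) satisfies ‖{p_i,s}‖_TVD = (q−1)/(q+2), and consequently Σ_{i=1}^{q} C_{G_{q,k}}({p_i,s}) ≤ 3q/(q+2); in particular, for q ≥ 2 this sum is at most (3/4)·q. (This is the corrected form of claim (ii), Λ₁ ≤ (3/4)√n, in the proof of the paper's Theorem 1.) -/

import Mathlib

/-- Earth Mover's Distance between two distributions `μ ν : V → ℝ` w.r.t. a
cost function `d : V → V → ℝ`: the minimum (infimum) of the total transport cost
over all feasible transport plans. -/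
noncomputable def EMD {V : Type} (d : V → V → ℝ) (μ ν : V → ℝ) : ℝ :=
  sInf { c : ℝ | ∃ z : V → V → ℝ,
    (∀ u v, 0 ≤ z u v) ∧ (∀ u, ∑ᶠ v, z u v = μ u) ∧ (∀ v, ∑ᶠ u, z u v = ν v) ∧
    c = ∑ᶠ u, ∑ᶠ v, d u v * z u v }

/-- The degree of a vertex: the number of its neighbours. -/
noncomputable def degC {V : Type} (G : SimpleGraph V) (u : V) : ℕ :=
  Nat.card {x | G.Adj u x}

open Classical in
/-- The uniform probability distribution on the closed neighbourhood of `u`. -/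
noncomputable def Pdist {V : Type} (G : SimpleGraph V) (u : V) : V → ℝ :=
  fun w => if w = u ∨ G.Adj u w then ((degC G u : ℝ) + 1)⁻¹ else 0

/-- The graph distance, as a real-valued cost function. -/
noncomputable def gdist {V : Type} (G : SimpleGraph V) : V → V → ℝ :=
  fun a b => (G.dist a b : ℝ)

/-- The total variation distance between the closed-neighbourhood distributions of `u`, `v`. -/
noncomputable def tvd {V : Type} (G : SimpleGraph V) (u v : V) : ℝ :=
  (1 / 2) * ∑ᶠ w, |Pdist G u w - Pdist G v w|

/-- The Ollivier–Ricci curvature of the (ordered) pair `u v`. -/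
noncomputable def ricci {V : Type} (G : SimpleGraph V) (u v : V) : ℝ :=
  1 - EMD (gdist G) (Pdist G u) (Pdist G v)


/-- Vertices of the complete 10-ary tree of depth `k`: lists over `Fin 10` of length
at most `k`, recording the (reversed) path from the root `[]`. -/
def TreeVert (k : ℕ) : Type := { l : List (Fin 10) // l.length ≤ k }

instance (k : ℕ) : DecidableEq (TreeVert k) :=
  inferInstanceAs (DecidableEq { l : List (Fin 10) // l.length ≤ k })

instance (k : ℕ) : Fintype (TreeVert k) :=
  Fintype.ofSurjective
    (fun x : Σ j : Fin (k + 1), List.Vector (Fin 10) j =>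
      (⟨x.2.1, by have h1 := x.2.2; have h2 := x.1.isLt; omega⟩ : TreeVert k))
    (fun y => ⟨⟨⟨y.1.length, Nat.lt_succ_of_le y.2⟩, ⟨y.1, rfl⟩⟩, Subtype.ext rfl⟩)

/-- The root of the tree. -/
def treeRoot (k : ℕ) : TreeVert k := ⟨[], by simp⟩

/-- The parent of a tree vertex (the root is mapped to itself). -/
def treeParent {k : ℕ} (x : TreeVert k) : TreeVert k :=
  ⟨x.1.tail, by have h1 := x.2; have h2 : x.1.tail.length = x.1.length - 1 := List.length_tail; omega⟩

/-- The vertex set of the graph `G_{q,k}`: the two special vertices `s`, `t`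
(encoded as `Fin 2`), the vertices `p_1, …, p_q`, and the tree vertices. -/
abbrev GVert (q k : ℕ) : Type := (Fin 2 ⊕ Fin q) ⊕ TreeVert k

def vS (q k : ℕ) : GVert q k := Sum.inl (Sum.inl 0)
def vT (q k : ℕ) : GVert q k := Sum.inl (Sum.inl 1)
def vP (q k : ℕ) (i : Fin q) : GVert q k := Sum.inl (Sum.inr i)
def vTr (q k : ℕ) (x : TreeVert k) : GVert q k := Sum.inr x

/-- Base adjacency relation generating the edges of `G_{q,k}`: the edge `{s,t}`,
the edges `{p_i, s}` and `{p_i, t}`, the bridge `{t, r_1}` to the root of the tree,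
and the parent-child tree edges. -/
def gadjBase (q k : ℕ) : GVert q k → GVert q k → Prop := fun x y =>
  (x = vS q k ∧ y = vT q k) ∨
  (∃ i : Fin q, x = vP q k i ∧ (y = vS q k ∨ y = vT q k)) ∨
  (x = vT q k ∧ y = vTr q k (treeRoot k)) ∨
  (∃ u v : TreeVert k, x = vTr q k u ∧ y = vTr q k v ∧ ∃ a : Fin 10, u.1 = a :: v.1)

/-- The graph `G_{q,k}` from the proof of the paper's Theorem 1
(with `q` playing the role of `√n`). -/
def Gqk (q k : ℕ) : SimpleGraph (GVert q k) := SimpleGraph.fromRel (gadjBase q k)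

/-- `N_k = (10^(k+1) - 1)/9`, the number of vertices of the complete 10-ary tree of depth `k`. -/
def Nk (k : ℕ) : ℕ := (10 ^ (k + 1) - 1) / 9

/-!
The closed neighbourhood `{p_i, s, t}` of `p_i` lies inside the closed neighbourhood
`{s, t, p_1, …, p_q}` of `s`, so the two uniform distributions share mass `3/(q+2)` and their
total variation distance is `1 - 3/(q+2)`. In a connected graph distinct vertices are at distance
at least `1`, so a transport plan pays at least the mass it moves off the diagonal, which is at
least the total variation distance. Hence `C(p_i s) ≤ 3/(q+2)` for each of the `q` edges.
-/

open Finset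

section UniformDistribution

variable {V : Type*} [DecidableEq V]

noncomputable def uniformOn (A : Finset V) (w : V) : ℝ :=
  if w ∈ A then (#A : ℝ)⁻¹ else 0

theorem uniformOn_nonneg (A : Finset V) (w : V) : 0 ≤ uniformOn A w := by
  unfold uniformOn; split <;> positivity

variable [Fintype V]

theorem sum_uniformOn {A : Finset V} (hA : A.Nonempty) : ∑ w, uniformOn A w = 1 := by
  simp only [uniformOn, Fintype.sum_ite_mem, sum_const, nsmul_eq_mul]
  exact mul_inv_cancel₀ (by exact_mod_cast hA.card_ne_zero)

theorem sum_min_uniformOn_of_subset {A B : Finset V} (hA : A.Nonempty) (hAB : A ⊆ B) :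
    ∑ w, min (uniformOn A w) (uniformOn B w) = #A / #B := by
  have hle : (#B : ℝ)⁻¹ ≤ (#A : ℝ)⁻¹ :=
    inv_anti₀ (by exact_mod_cast hA.card_pos) (by exact_mod_cast card_le_card hAB)
  have hmin (w : V) : min (uniformOn A w) (uniformOn B w) =
      if w ∈ A then (#B : ℝ)⁻¹ else 0 := by
    by_cases hw : w ∈ A
    · simp [uniformOn, hw, hAB hw, hle]
    · rw [uniformOn, if_neg hw, if_neg hw]
      exact min_eq_left (uniformOn_nonneg B w)
  simp only [hmin, Fintype.sum_ite_mem, sum_const, nsmul_eq_mul, div_eq_mul_inv]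

end UniformDistribution

section TransportBound

variable {V : Type} [Fintype V] {μ ν : V → ℝ}

theorem half_sum_abs_sub_eq_one_sub_sum_min (hμ : ∑ w, μ w = 1) (hν : ∑ w, ν w = 1) :
    1 / 2 * ∑ w, |μ w - ν w| = 1 - ∑ w, min (μ w) (ν w) := by
  have habs (w : V) : |μ w - ν w| = μ w + ν w - 2 * min (μ w) (ν w) := by
    rw [← max_sub_min_eq_abs', ← min_add_max (μ w) (ν w)]
    ring
  simp only [habs, sum_sub_distrib, sum_add_distrib, ← mul_sum, hμ, hν]
  ring

theorem one_sub_sum_min_le_EMD {d : V → V → ℝ}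
    (hd0 : ∀ u v, 0 ≤ d u v) (hd1 : ∀ u v, u ≠ v → 1 ≤ d u v)
    (hμ0 : ∀ u, 0 ≤ μ u) (hν0 : ∀ v, 0 ≤ ν v)
    (hμ1 : ∑ u, μ u = 1) (hν1 : ∑ v, ν v = 1) :
    1 - ∑ w, min (μ w) (ν w) ≤ EMD d μ ν := by
  apply le_csInf
  · refine ⟨_, fun u v => μ u * ν v, fun u v => mul_nonneg (hμ0 u) (hν0 v), fun u => ?_,
      fun v => ?_, rfl⟩
    · rw [finsum_eq_sum_of_fintype, ← mul_sum, hν1, mul_one]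
    · rw [finsum_eq_sum_of_fintype, ← sum_mul, hμ1, one_mul]
  rintro c ⟨z, hz0, hzμ, hzν, rfl⟩
  simp only [finsum_eq_sum_of_fintype] at hzμ hzν ⊢
  have hdiag (u : V) : z u u ≤ min (μ u) (ν u) :=
    le_min (hzμ u ▸ single_le_sum (fun v _ => hz0 u v) (mem_univ u))
      (hzν u ▸ single_le_sum (fun v _ => hz0 v u) (mem_univ u))
  have hrow (u : V) : μ u - min (μ u) (ν u) ≤ ∑ v, d u v * z u v := by
    classical
    calc μ u - min (μ u) (ν u) ≤ μ u - z u u := by linarith [hdiag u]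
      _ = ∑ v ∈ univ.erase u, z u v := by
        rw [← hzμ u, ← add_sum_erase _ _ (mem_univ u), add_sub_cancel_left]
      _ ≤ ∑ v ∈ univ.erase u, d u v * z u v :=
        sum_le_sum fun v hv =>
          le_mul_of_one_le_left (hz0 u v) (hd1 u v (ne_of_mem_erase hv).symm)
      _ ≤ ∑ v, d u v * z u v :=
        sum_le_sum_of_subset_of_nonneg (erase_subset _ _) fun v _ _ =>
          mul_nonneg (hd0 u v) (hz0 u v)
  calc 1 - ∑ w, min (μ w) (ν w) = ∑ u, (μ u - min (μ u) (ν u)) := by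
        rw [sum_sub_distrib, hμ1]
    _ ≤ ∑ u, ∑ v, d u v * z u v := sum_le_sum fun u _ => hrow u

end TransportBound

section ClosedNeighbourhood

variable {V : Type} [Fintype V] (G : SimpleGraph V)

open Classical in
noncomputable def closedNbhd (u : V) : Finset V := {w | w = u ∨ G.Adj u w}

theorem mem_closedNbhd {u w : V} : w ∈ closedNbhd G u ↔ w = u ∨ G.Adj u w := by
  simp [closedNbhd]

theorem closedNbhd_nonempty (u : V) : (closedNbhd G u).Nonempty :=
  ⟨u, (mem_closedNbhd G).2 (Or.inl rfl)⟩

theorem card_closedNbhd (u : V) : #(closedNbhd G u) = degC G u + 1 := by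
  classical
  have h : closedNbhd G u = insert u ({w | G.Adj u w} : Finset V) := by
    ext w; simp [mem_closedNbhd]
  rw [h, card_insert_of_notMem (by simp), degC, Nat.card_eq_card_toFinset, Set.toFinset_ofPred]

theorem Pdist_eq_uniformOn [DecidableEq V] (u : V) : Pdist G u = uniformOn (closedNbhd G u) := by
  ext w
  simp only [Pdist, uniformOn, card_closedNbhd, ← mem_closedNbhd]
  push_cast
  rfl

theorem sum_Pdist (u : V) : ∑ w, Pdist G u w = 1 := by
  classical
  rw [Pdist_eq_uniformOn, sum_uniformOn (closedNbhd_nonempty G u)]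

theorem tvd_eq_of_closedNbhd_subset {u v : V} (h : closedNbhd G u ⊆ closedNbhd G v) :
    tvd G u v = 1 - #(closedNbhd G u) / #(closedNbhd G v) := by
  classical
  rw [tvd, finsum_eq_sum_of_fintype, half_sum_abs_sub_eq_one_sub_sum_min (sum_Pdist G u)
    (sum_Pdist G v), Pdist_eq_uniformOn, Pdist_eq_uniformOn,
    sum_min_uniformOn_of_subset (closedNbhd_nonempty G u) h]

theorem ricci_le_one_sub_tvd (hG : G.Connected) (u v : V) : ricci G u v ≤ 1 - tvd G u v := by
  have hd1 (a b : V) (hab : a ≠ b) : 1 ≤ gdist G a b :=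
    Nat.one_le_cast.mpr (hG.pos_dist_of_ne hab)
  have hP0 (a w : V) : 0 ≤ Pdist G a w := by
    classical
    rw [Pdist_eq_uniformOn]; exact uniformOn_nonneg _ _
  have := one_sub_sum_min_le_EMD (d := gdist G) (fun a b => Nat.cast_nonneg _) hd1
    (hP0 u) (hP0 v) (sum_Pdist G u) (sum_Pdist G v)
  rw [ricci, tvd, finsum_eq_sum_of_fintype,
    half_sum_abs_sub_eq_one_sub_sum_min (sum_Pdist G u) (sum_Pdist G v)]
  linarith

end ClosedNeighbourhood

namespace Gqk

variable {q k : ℕ}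

theorem adj_iff {x y : GVert q k} :
    (Gqk q k).Adj x y ↔ x ≠ y ∧ (gadjBase q k x y ∨ gadjBase q k y x) :=
  SimpleGraph.fromRel_adj _ _ _

theorem adj_vP_iff {i : Fin q} {y : GVert q k} :
    (Gqk q k).Adj (vP q k i) y ↔ y = vS q k ∨ y = vT q k := by
  rw [adj_iff]
  constructor
  · rintro ⟨-, h | h⟩ <;> simp [gadjBase, vP, vS, vT, vTr] at h
    exact h
  · rintro (rfl | rfl)
    · exact ⟨by simp [vP, vS], Or.inl (Or.inr (Or.inl ⟨i, rfl, Or.inl rfl⟩))⟩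
    · exact ⟨by simp [vP, vT], Or.inl (Or.inr (Or.inl ⟨i, rfl, Or.inr rfl⟩))⟩

theorem adj_vS_iff {y : GVert q k} :
    (Gqk q k).Adj (vS q k) y ↔ y = vT q k ∨ ∃ i, y = vP q k i := by
  rw [adj_iff]
  constructor
  · rintro ⟨-, h | h⟩ <;> simp [gadjBase, vP, vS, vT, vTr] at h <;> tauto
  · rintro (rfl | ⟨i, rfl⟩)
    · exact ⟨by simp [vS, vT], Or.inl (Or.inl ⟨rfl, rfl⟩)⟩
    · exact ⟨by simp [vP, vS], Or.inr (Or.inr (Or.inl ⟨i, rfl, Or.inl rfl⟩))⟩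

theorem adj_vT_root : (Gqk q k).Adj (vT q k) (vTr q k (treeRoot k)) :=
  adj_iff.2 ⟨by simp [vT, vTr], Or.inl (Or.inr (Or.inr (Or.inl ⟨rfl, rfl⟩)))⟩

theorem adj_child_parent (a : Fin 10) (l : List (Fin 10)) (h : (a :: l).length ≤ k) :
    (Gqk q k).Adj (vTr q k ⟨a :: l, h⟩) (vTr q k ⟨l, by simp at h; omega⟩) :=
  adj_iff.2 ⟨fun hc => List.cons_ne_self a l (congrArg Subtype.val (Sum.inr_injective hc)),
    Or.inl (Or.inr (Or.inr (Or.inr ⟨_, _, rfl, rfl, a, rfl⟩)))⟩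

theorem reachable_root (l : List (Fin 10)) (h : l.length ≤ k) :
    (Gqk q k).Reachable (vTr q k ⟨l, h⟩) (vTr q k (treeRoot k)) := by
  induction l with
  | nil => rfl
  | cons a l ih => exact (adj_child_parent a l h).reachable.trans (ih _)

theorem reachable_vS : ∀ x : GVert q k, (Gqk q k).Reachable x (vS q k)
  | Sum.inl (Sum.inl 0) => .rfl
  | Sum.inl (Sum.inl 1) => (adj_vS_iff.2 (Or.inl rfl)).symm.reachable
  | Sum.inl (Sum.inr _) => (adj_vP_iff.2 (Or.inl rfl)).reachable
  | Sum.inr ⟨l, h⟩ => (reachable_root l h).trans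
      (adj_vT_root.symm.reachable.trans (adj_vS_iff.2 (Or.inl rfl)).symm.reachable)

theorem connected : (Gqk q k).Connected :=
  (SimpleGraph.connected_iff _).2
    ⟨fun x y => (reachable_vS x).trans (reachable_vS y).symm, ⟨vS q k⟩⟩

theorem closedNbhd_vP (i : Fin q) :
    closedNbhd (Gqk q k) (vP q k i) = {vP q k i, vS q k, vT q k} := by
  ext w; simp [mem_closedNbhd, adj_vP_iff]

theorem vP_injective : Function.Injective (vP q k) :=
  fun i j h => by simpa [vP] using h

theorem closedNbhd_vS :
    closedNbhd (Gqk q k) (vS q k) =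
      insert (vS q k) (insert (vT q k) (univ.image (vP q k))) := by
  ext w; simp [mem_closedNbhd, adj_vS_iff, eq_comm]

theorem card_closedNbhd_vP (i : Fin q) : #(closedNbhd (Gqk q k) (vP q k i)) = 3 := by
  rw [closedNbhd_vP, card_insert_of_notMem, card_pair] <;> simp [vP, vS, vT]

theorem card_closedNbhd_vS : #(closedNbhd (Gqk q k) (vS q k)) = q + 2 := by
  rw [closedNbhd_vS, card_insert_of_notMem, card_insert_of_notMem,
    card_image_of_injective _ vP_injective] <;> simp [vP, vS, vT]

theorem closedNbhd_vP_subset_vS (i : Fin q) :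
    closedNbhd (Gqk q k) (vP q k i) ⊆ closedNbhd (Gqk q k) (vS q k) := by
  intro w hw
  rw [mem_closedNbhd, adj_vP_iff] at hw
  rw [mem_closedNbhd, adj_vS_iff]
  rcases hw with rfl | rfl | rfl
  · exact Or.inr (Or.inr ⟨i, rfl⟩)
  · exact Or.inl rfl
  · exact Or.inr (Or.inl rfl)

theorem tvd_vP_vS (i : Fin q) : tvd (Gqk q k) (vP q k i) (vS q k) = 1 - 3 / ((q : ℝ) + 2) := by
  rw [tvd_eq_of_closedNbhd_subset _ (closedNbhd_vP_subset_vS i), card_closedNbhd_vP,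
    card_closedNbhd_vS]
  push_cast
  rfl

end Gqk

theorem tvd_pis_edges_general (q k : ℕ) :
    (∀ i : Fin q, tvd (Gqk q k) (vP q k i) (vS q k) = ((q : ℝ) - 1) / ((q : ℝ) + 2)) ∧
    (∑ i : Fin q, ricci (Gqk q k) (vP q k i) (vS q k)) ≤ 3 * (q : ℝ) / ((q : ℝ) + 2) ∧
    (2 ≤ q → (∑ i : Fin q, ricci (Gqk q k) (vP q k i) (vS q k)) ≤ (3 / 4) * (q : ℝ)) := by
  have hq2 : (0 : ℝ) < q + 2 := by positivity
  have hricci (i : Fin q) : ricci (Gqk q k) (vP q k i) (vS q k) ≤ 3 / ((q : ℝ) + 2) := by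
    have := ricci_le_one_sub_tvd _ Gqk.connected (vP q k i) (vS q k)
    rwa [Gqk.tvd_vP_vS, sub_sub_cancel] at this
  have hsum : ∑ i : Fin q, ricci (Gqk q k) (vP q k i) (vS q k) ≤ 3 * (q : ℝ) / ((q : ℝ) + 2) :=
    calc ∑ i : Fin q, ricci (Gqk q k) (vP q k i) (vS q k)
        ≤ ∑ _i : Fin q, 3 / ((q : ℝ) + 2) := sum_le_sum fun i _ => hricci i
      _ = 3 * (q : ℝ) / ((q : ℝ) + 2) := by
        rw [sum_const, card_univ, Fintype.card_fin, nsmul_eq_mul, mul_div_assoc', mul_comm]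
  refine ⟨fun i => ?_, hsum, fun hq => hsum.trans ?_⟩
  · rw [Gqk.tvd_vP_vS]
    field_simp
    ring
  · rw [div_le_iff₀ hq2]
    nlinarith [(Nat.ofNat_le_cast.mpr hq : (2 : ℝ) ≤ q)]

/-- In the graph `G_{q,k}` (`q ≥ 1`, `k ≥ 1`), each edge `{p_i, s}`
(`1 ≤ i ≤ q`) satisfies `‖{p_i,s}‖_TVD = (q−1)/(q+2)`, and consequently
`Σ_{i=1}^{q} C_{G_{q,k}}({p_i,s}) ≤ 3q/(q+2)`; in particular, for `q ≥ 2` this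
sum is at most `(3/4)·q`. -/
theorem tvd_pis_edges (q k : ℕ) (hq : 1 ≤ q) (hk : 1 ≤ k) :
    (∀ i : Fin q, tvd (Gqk q k) (vP q k i) (vS q k) = ((q : ℝ) - 1) / ((q : ℝ) + 2)) ∧
    (∑ i : Fin q, ricci (Gqk q k) (vP q k i) (vS q k)) ≤ 3 * (q : ℝ) / ((q : ℝ) + 2) ∧
    (2 ≤ q → (∑ i : Fin q, ricci (Gqk q k) (vP q k i) (vS q k)) ≤ (3 / 4) * (q : ℝ)) :=
  tvd_pis_edges_general q k
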